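/- arXiv:2411.19607 — 2 statements merged into one kernel-verified Lean document; each statement's English description precedes it below -/
import Mathlib

section
/- (Lemma 3.) The single-obstacle combined feedback μ is continuous on ℝ^p \ {q} and locally Lipschitz continuous on ℝ^p \ ({q} ∪ {0}). -/
open scoped RealInnerProductSpace
open Classical

noncomputable def sc (c r : ℝ) : ℝ :=
  if r ≤ c then c ^ ((2:ℝ)/3) * r ^ ((1:ℝ)/3) else r

noncomputable def nuS (c : ℝ) {p : ℕ} (ξ : EuclideanSpace ℝ (Fin p)) :
    EuclideanSpace ℝ (Fin p) :=
  if ξ = 0 then 0 else (-(sc c ‖ξ‖)⁻¹) • ξ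

noncomputable def proj {p : ℕ} (z v : EuclideanSpace ℝ (Fin p)) :
    EuclideanSpace ℝ (Fin p) :=
  v - (⟪z, v⟫ / ‖z‖ ^ 2) • z

noncomputable def nuA (c : ℝ) {p : ℕ} (q ξ : EuclideanSpace ℝ (Fin p)) :
    EuclideanSpace ℝ (Fin p) :=
  proj (ξ - q) (nuS c ξ)

noncomputable def sigmaQ {p : ℕ} (q ξ : EuclideanSpace ℝ (Fin p)) : ℝ :=
  max 0 (min (⟪ξ, ξ - q⟫ + 1) 1)

noncomputable def alphaS {p : ℕ} (q : EuclideanSpace ℝ (Fin p)) (Δ lam : ℝ)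
    (ξ : EuclideanSpace ℝ (Fin p)) : ℝ :=
  max 0 (min ((‖ξ - q‖ - Δ * sigmaQ q ξ) / (lam - Δ)) 1)

noncomputable def alphaA {p : ℕ} (q : EuclideanSpace ℝ (Fin p)) (Δ lam : ℝ)
    (ξ : EuclideanSpace ℝ (Fin p)) : ℝ :=
  sigmaQ q ξ * (1 - alphaS q Δ lam ξ)

noncomputable def mu (c : ℝ) {p : ℕ} (q : EuclideanSpace ℝ (Fin p)) (Δ lam : ℝ)
    (ξ : EuclideanSpace ℝ (Fin p)) : EuclideanSpace ℝ (Fin p) :=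
  alphaS q Δ lam ξ • nuS c ξ + alphaA q Δ lam ξ • nuA c q ξ

/-!
The weights `σ`, `α_s`, `α_a` are built from smooth functions by `max`, `min`, sums and
products, so they are locally Lipschitz everywhere. Away from the origin `s_c(r)` is the
maximum of `r` and `c^(2/3) r^(1/3)`, both smooth and positive for `r > 0`, so `ν_s` is
locally Lipschitz there, and the projection `π(z) v` is smooth in `(z, v)` for `z ≠ 0`.
At the origin `ν_s` is merely Hölder: `‖ν_s ξ‖ ≤ (‖ξ‖ / c)^(2/3)`, which gives continuity.
-/

open Filter Topology Set

def LocallyLipschitzAt {α β : Type*} [PseudoEMetricSpace α] [PseudoEMetricSpace β]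
    (f : α → β) (x : α) : Prop :=
  ∃ K, ∃ t ∈ 𝓝 x, LipschitzOnWith K f t

namespace LocallyLipschitzAt

section PseudoEMetric

variable {α β γ : Type*} [PseudoEMetricSpace α] [PseudoEMetricSpace β] [PseudoEMetricSpace γ]
  {f : α → β} {x : α}

theorem _root_.LocallyLipschitz.locallyLipschitzAt (hf : LocallyLipschitz f) (x : α) :
    LocallyLipschitzAt f x :=
  hf x

theorem continuousAt (hf : LocallyLipschitzAt f x) : ContinuousAt f x := by
  obtain ⟨K, t, ht, hK⟩ := hf
  exact hK.continuousOn.continuousAt ht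

theorem congr (hf : LocallyLipschitzAt f x) {g : α → β} (hfg : f =ᶠ[𝓝 x] g) :
    LocallyLipschitzAt g x := by
  obtain ⟨K, t, ht, hK⟩ := hf
  refine ⟨K, t ∩ {y | f y = g y}, inter_mem ht hfg, fun a ha b hb => ?_⟩
  rw [← ha.2, ← hb.2]
  exact hK ha.1 hb.1

theorem comp {g : β → γ} (hg : LocallyLipschitzAt g (f x)) (hf : LocallyLipschitzAt f x) :
    LocallyLipschitzAt (g ∘ f) x := by
  obtain ⟨Kg, u, hu, hgu⟩ := hg
  obtain ⟨Kf, t, ht, hft⟩ := hf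
  refine ⟨Kg * Kf, t ∩ f ⁻¹' u, inter_mem ht (hft.continuousOn.continuousAt ht hu), ?_⟩
  exact hgu.comp (hft.mono inter_subset_left) ((mapsTo_preimage f u).mono_left inter_subset_right)

theorem prodMk {g : α → γ} (hf : LocallyLipschitzAt f x) (hg : LocallyLipschitzAt g x) :
    LocallyLipschitzAt (fun y => (f y, g y)) x := by
  obtain ⟨Kf, t, ht, hft⟩ := hf
  obtain ⟨Kg, u, hu, hgu⟩ := hg
  exact ⟨max Kf Kg, t ∩ u, inter_mem ht hu,
    (hft.mono inter_subset_left).prodMk (hgu.mono inter_subset_right)⟩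

theorem max {f g : α → ℝ} (hf : LocallyLipschitzAt f x) (hg : LocallyLipschitzAt g x) :
    LocallyLipschitzAt (fun y => max (f y) (g y)) x :=
  comp (lipschitzWith_max.locallyLipschitz _) (hf.prodMk hg)

end PseudoEMetric

theorem _root_.ContDiffAt.locallyLipschitzAt {E F : Type*} [NormedAddCommGroup E]
    [NormedSpace ℝ E] [NormedAddCommGroup F] [NormedSpace ℝ F] {f : E → F} {x : E}
    (hf : ContDiffAt ℝ 1 f x) : LocallyLipschitzAt f x :=
  hf.exists_lipschitzOnWith

variable {α F : Type*} [PseudoEMetricSpace α] [NormedAddCommGroup F] [NormedSpace ℝ F]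
  {x : α}

theorem add {f g : α → F} (hf : LocallyLipschitzAt f x) (hg : LocallyLipschitzAt g x) :
    LocallyLipschitzAt (fun y => f y + g y) x :=
  (contDiff_add.contDiffAt.locallyLipschitzAt).comp (hf.prodMk hg)

theorem smul {f : α → ℝ} {g : α → F} (hf : LocallyLipschitzAt f x)
    (hg : LocallyLipschitzAt g x) : LocallyLipschitzAt (fun y => f y • g y) x :=
  (contDiff_smul.contDiffAt.locallyLipschitzAt).comp (hf.prodMk hg)

theorem inv {f : α → ℝ} (hf : LocallyLipschitzAt f x) (hfx : f x ≠ 0) :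
    LocallyLipschitzAt (fun y => (f y)⁻¹) x :=
  ((contDiffAt_inv ℝ hfx).locallyLipschitzAt).comp hf

end LocallyLipschitzAt

theorem sc_eq_max {c r : ℝ} (hc : 0 < c) (hr : 0 ≤ r) :
    sc c r = max r (c ^ ((2:ℝ)/3) * r ^ ((1:ℝ)/3)) := by
  have hsplit : r = r ^ ((2:ℝ)/3) * r ^ ((1:ℝ)/3) := by
    rw [← Real.rpow_add' hr (by norm_num)]
    norm_num
  unfold sc
  split_ifs with h
  · refine (max_eq_right ?_).symm
    conv_lhs => rw [hsplit]
    gcongr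
  · refine (max_eq_left ?_).symm
    conv_rhs => rw [hsplit]
    gcongr
    linarith

theorem le_sc {c r : ℝ} (hc : 0 < c) (hr : 0 ≤ r) : r ≤ sc c r := by
  rw [sc_eq_max hc hr]
  exact le_max_left _ _

theorem locallyLipschitzAt_sc {c r : ℝ} (hc : 0 < c) (hr : 0 < r) :
    LocallyLipschitzAt (sc c) r := by
  have hpow : ContDiffAt ℝ 1 (fun s : ℝ => c ^ ((2:ℝ)/3) * s ^ ((1:ℝ)/3)) r :=
    contDiffAt_const.mul (Real.contDiffAt_rpow_const_of_ne hr.ne')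
  refine ((LocallyLipschitz.id.locallyLipschitzAt r).max hpow.locallyLipschitzAt).congr ?_
  filter_upwards [eventually_gt_nhds hr] with s hs
  exact (sc_eq_max hc hs.le).symm

variable {p : ℕ}

local notation "E" => EuclideanSpace ℝ (Fin p)

theorem locallyLipschitzAt_nuS {c : ℝ} (hc : 0 < c) {x : E} (hx : x ≠ 0) :
    LocallyLipschitzAt (nuS c) x := by
  have hsc : LocallyLipschitzAt (fun ξ : E => sc c ‖ξ‖) x :=
    (locallyLipschitzAt_sc hc (norm_pos_iff.2 hx)).comp
      (lipschitzWith_one_norm.locallyLipschitz.locallyLipschitzAt x)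
  have hscx : sc c ‖x‖ ≠ 0 := ((norm_pos_iff.2 hx).trans_le (le_sc hc (norm_nonneg x))).ne'
  have hneg : LocallyLipschitzAt (fun ξ : E => -ξ) x :=
    LipschitzWith.id.neg.locallyLipschitz.locallyLipschitzAt x
  refine ((hsc.inv hscx).smul hneg).congr ?_
  filter_upwards [eventually_ne_nhds hx] with ξ hξ
  simp [nuS, hξ]

theorem norm_nuS_le {c : ℝ} (hc : 0 < c) (ξ : E) :
    ‖nuS c ξ‖ ≤ ‖ξ‖ ^ ((2:ℝ)/3) / c ^ ((2:ℝ)/3) := by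
  rcases eq_or_ne ξ 0 with rfl | hξ
  · simp [nuS]
  have hr : 0 < ‖ξ‖ := norm_pos_iff.2 hξ
  have hsc : c ^ ((2:ℝ)/3) * ‖ξ‖ ^ ((1:ℝ)/3) ≤ sc c ‖ξ‖ := by
    rw [sc_eq_max hc hr.le]
    exact le_max_right _ _
  have hsplit : ‖ξ‖ = ‖ξ‖ ^ ((2:ℝ)/3) * ‖ξ‖ ^ ((1:ℝ)/3) := by
    rw [← Real.rpow_add hr]
    norm_num
  calc ‖nuS c ξ‖ = ‖ξ‖ / sc c ‖ξ‖ := by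
        rw [nuS, if_neg hξ, norm_smul, norm_neg, norm_inv, Real.norm_of_nonneg
          (hr.le.trans (le_sc hc hr.le)), inv_mul_eq_div]
    _ ≤ ‖ξ‖ / (c ^ ((2:ℝ)/3) * ‖ξ‖ ^ ((1:ℝ)/3)) := by gcongr
    _ = ‖ξ‖ ^ ((2:ℝ)/3) / c ^ ((2:ℝ)/3) := by
        rw [mul_comm, ← div_div, div_eq_of_eq_mul (by positivity) hsplit]

theorem continuousAt_nuS_zero {c : ℝ} (hc : 0 < c) : ContinuousAt (nuS c) (0 : E) := by
  have hbound : Tendsto (fun ξ : E => ‖ξ‖ ^ ((2:ℝ)/3) / c ^ ((2:ℝ)/3)) (𝓝 0) (𝓝 0) := by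
    have h : Continuous (fun ξ : E => ‖ξ‖ ^ ((2:ℝ)/3) / c ^ ((2:ℝ)/3)) :=
      (continuous_norm.rpow_const fun _ => Or.inr (by norm_num)).div_const _
    simpa using h.tendsto (0 : E)
  rw [ContinuousAt, show nuS c (0 : E) = 0 from if_pos rfl]
  exact squeeze_zero_norm (norm_nuS_le hc) hbound

theorem contDiffAt_proj {n : WithTop ℕ∞} {z : E} (hz : z ≠ 0) (v : E) :
    ContDiffAt ℝ n (fun w : E × E => proj w.1 w.2) (z, v) :=
  contDiffAt_snd.sub (((contDiffAt_fst.inner ℝ contDiffAt_snd).div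
    (contDiffAt_fst.norm_sq ℝ) (by simpa using hz)).smul contDiffAt_fst)

theorem locallyLipschitz_sigmaQ (q : E) : LocallyLipschitz (sigmaQ q) := by
  have h : ContDiff ℝ 1 (fun ξ : E => ⟪ξ, ξ - q⟫ + 1) :=
    (contDiff_id.inner ℝ (contDiff_id.sub contDiff_const)).add contDiff_const
  exact (h.locallyLipschitz.min_const 1).const_max 0

theorem locallyLipschitz_alphaS (q : E) (Δ lam : ℝ) : LocallyLipschitz (alphaS q Δ lam) := by
  have hdist : LocallyLipschitz (fun ξ : E => ‖ξ - q‖) :=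
    (lipschitzWith_one_norm.comp (LipschitzWith.id.sub (LipschitzWith.const q))).locallyLipschitz
  have hcomb : ContDiff ℝ 1 (fun w : ℝ × ℝ => (w.1 - Δ * w.2) / (lam - Δ)) := by fun_prop
  have hratio : LocallyLipschitz (fun ξ : E => (‖ξ - q‖ - Δ * sigmaQ q ξ) / (lam - Δ)) :=
    hcomb.locallyLipschitz.comp (hdist.prodMk (locallyLipschitz_sigmaQ q))
  exact (hratio.min_const 1).const_max 0

theorem locallyLipschitz_alphaA (q : E) (Δ lam : ℝ) : LocallyLipschitz (alphaA q Δ lam) := by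
  have hcomb : ContDiff ℝ 1 (fun w : ℝ × ℝ => w.1 * (1 - w.2)) := by fun_prop
  exact hcomb.locallyLipschitz.comp
    ((locallyLipschitz_sigmaQ q).prodMk (locallyLipschitz_alphaS q Δ lam))

theorem locallyLipschitzAt_nuA {c : ℝ} (hc : 0 < c) {q x : E} (hx : x ≠ 0) (hxq : x ≠ q) :
    LocallyLipschitzAt (nuA c q) x :=
  LocallyLipschitzAt.comp (f := fun ξ : E => (ξ - q, nuS c ξ))
    (contDiffAt_proj (sub_ne_zero.2 hxq) _).locallyLipschitzAt
    (((LipschitzWith.id.sub (LipschitzWith.const q)).locallyLipschitz.locallyLipschitzAt x).prodMk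
      (locallyLipschitzAt_nuS hc hx))

theorem continuousAt_nuA_zero {c : ℝ} (hc : 0 < c) {q : E} (hq : q ≠ 0) :
    ContinuousAt (nuA c q) 0 :=
  ContinuousAt.comp (f := fun ξ : E => (ξ - q, nuS c ξ))
    (contDiffAt_proj (n := 0) (by simpa using hq) _).continuousAt
    ((continuousAt_id.sub continuousAt_const).prodMk (continuousAt_nuS_zero hc))

theorem locallyLipschitzAt_mu {c : ℝ} (hc : 0 < c) {q x : E} (Δ lam : ℝ) (hx : x ≠ 0)
    (hxq : x ≠ q) : LocallyLipschitzAt (mu c q Δ lam) x :=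
  (((locallyLipschitz_alphaS q Δ lam).locallyLipschitzAt x).smul
    (locallyLipschitzAt_nuS hc hx)).add
    (((locallyLipschitz_alphaA q Δ lam).locallyLipschitzAt x).smul
      (locallyLipschitzAt_nuA hc hx hxq))

theorem continuousAt_mu_zero {c : ℝ} (hc : 0 < c) {q : E} (Δ lam : ℝ) (hq : q ≠ 0) :
    ContinuousAt (mu c q Δ lam) 0 :=
  (((locallyLipschitz_alphaS q Δ lam).continuous.continuousAt).smul
    (continuousAt_nuS_zero hc)).add
    (((locallyLipschitz_alphaA q Δ lam).continuous.continuousAt).smul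
    (continuousAt_nuA_zero hc hq))

theorem stmt4_general (p : ℕ) (c : ℝ) (hc : 0 < c)
    (q : EuclideanSpace ℝ (Fin p)) (Δ lam : ℝ) :
    ContinuousOn (fun ξ => mu c q Δ lam ξ) ({q}ᶜ : Set (EuclideanSpace ℝ (Fin p))) ∧
    (∀ ξ : EuclideanSpace ℝ (Fin p), ξ ≠ q → ξ ≠ 0 →
      ∃ K : NNReal, ∃ t ∈ nhds ξ, LipschitzOnWith K (fun ξ' => mu c q Δ lam ξ') t) := by
  refine ⟨fun x hxq => ?_, fun x hxq hx => locallyLipschitzAt_mu hc Δ lam hx hxq⟩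
  rcases eq_or_ne x 0 with rfl | hx
  · exact (continuousAt_mu_zero hc Δ lam (Ne.symm hxq)).continuousWithinAt
  · exact (locallyLipschitzAt_mu hc Δ lam hx hxq).continuousAt.continuousWithinAt

theorem stmt4 (p : ℕ) (hp : 1 ≤ p) (c : ℝ) (hc : 0 < c)
    (q : EuclideanSpace ℝ (Fin p)) (Δ lam : ℝ) (hΔ : 0 < Δ) (hlam : Δ < lam) :
    ContinuousOn (fun ξ => mu c q Δ lam ξ) ({q}ᶜ : Set (EuclideanSpace ℝ (Fin p))) ∧
    (∀ ξ : EuclideanSpace ℝ (Fin p), ξ ≠ q → ξ ≠ 0 →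
      ∃ K : NNReal, ∃ t ∈ nhds ξ, LipschitzOnWith K (fun ξ' => mu c q Δ lam ξ') t) :=
  stmt4_general p c hc q Δ lam
end

section
/- (Theorem 1, safety part.) Assume ‖q‖ > Δ and let ξ : [0,∞) → ℝ^p be continuously differentiable with ξ'(t) = μ(ξ(t)) for all t ≥ 0 and ξ(0) = ξ_0 satisfying ‖ξ_0 − q‖ ≥ Δ. Then ‖ξ(t) − q‖ ≥ Δ for all t ≥ 0, i.e. the trajectory never enters the open safety ball B_Δ(q). -/
open scoped RealInnerProductSpace
open Classical

/-!
The squared distance `g t = ‖ξ t - q‖ ^ 2` has derivative `2 ⟪ξ - q, μ ξ⟫`, and this is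
nonnegative whenever `‖ξ - q‖ ≤ Δ`: the avoidance field `ν_a` is orthogonal to `ξ - q`, and inside
the ball either `⟪ξ, ξ - q⟫ ≥ 0`, so that `σ = 1` and the stabilizing weight `α_s` vanishes, or
`⟪ξ, ξ - q⟫ < 0`, so that `⟪ξ - q, ν_s ξ⟫ = -⟪ξ, ξ - q⟫ / s_c ‖ξ‖ ≥ 0`. A function whose derivative
is nonnegative wherever it lies below the level `Δ ^ 2` cannot cross that level downwards.
-/

open Set

theorem le_image_of_deriv_right_nonneg_of_lt {g g' : ℝ → ℝ} {a b m : ℝ}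
    (hg : ContinuousOn g (Icc a b)) (hg' : ∀ x ∈ Ico a b, HasDerivWithinAt g (g' x) (Ici x) x)
    (ha : m ≤ g a) (bound : ∀ x ∈ Ico a b, g x < m → 0 ≤ g' x) :
    ∀ ⦃x⦄, x ∈ Icc a b → m ≤ g x := by
  intro x hx
  -- fence `-g` from above by the strictly increasing barriers `-m + ε (t - a + 1)`
  have fenced : ∀ ε > 0, m - ε * (x - a + 1) ≤ g x := by
    intro ε hε
    have := image_le_of_deriv_right_lt_deriv_boundary' (f := fun t => -g t) (f' := fun t => -g' t)
      (B := fun t => -m + ε * (t - a + 1)) (B' := fun _ => ε) hg.neg (fun t ht => (hg' t ht).neg)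
      (by linarith) (by fun_prop)
      (fun t _ => ((hasDerivWithinAt_id t _).sub_const a |>.add_const 1 |>.const_mul ε
        |>.const_add (-m)).congr_deriv (by ring))
      (fun t ht heq => by
        have hlt : g t < m := by nlinarith [ht.1]
        linarith [bound t ht hlt]) hx
    linarith
  have hlen : 0 < x - a + 1 := by linarith [hx.1]
  refine le_of_forall_pos_le_add fun δ hδ => ?_
  have := fenced (δ / (x - a + 1)) (by positivity)
  rw [div_mul_cancel₀ _ hlen.ne'] at this
  linarith

theorem le_norm_sub_of_inner_deriv_nonneg {E : Type*} [NormedAddCommGroup E]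
    [InnerProductSpace ℝ E] {γ γ' : ℝ → E} {q : E} {r : ℝ} (hr : 0 ≤ r)
    (hγ : ∀ t ∈ Ici (0 : ℝ), HasDerivAt γ (γ' t) t) (h₀ : r ≤ ‖γ 0 - q‖)
    (bound : ∀ t ∈ Ici (0 : ℝ), ‖γ t - q‖ < r → 0 ≤ ⟪γ t - q, γ' t⟫) :
    ∀ t ∈ Ici (0 : ℝ), r ≤ ‖γ t - q‖ := by
  intro t ht
  have hderiv : ∀ s ∈ Ici (0 : ℝ),
      HasDerivAt (fun s => ‖γ s - q‖ ^ 2) (2 * ⟪γ s - q, γ' s⟫) s :=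
    fun s hs => ((hγ s hs).sub_const q).norm_sq
  have hsq : r ^ 2 ≤ ‖γ t - q‖ ^ 2 := by
    refine le_image_of_deriv_right_nonneg_of_lt (a := 0) (b := t)
      (fun s hs => (hderiv s hs.1).continuousAt.continuousWithinAt)
      (fun s hs => (hderiv s hs.1).hasDerivWithinAt) (by gcongr) (fun s hs hlt => ?_) ⟨ht, le_rfl⟩
    have hlt' : ‖γ s - q‖ < r := (pow_lt_pow_iff_left₀ (norm_nonneg _) hr two_ne_zero).1 hlt
    linarith [bound s hs.1 hlt']
  exact (pow_le_pow_iff_left₀ hr (norm_nonneg _) two_ne_zero).1 hsq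

lemma sc_nonneg (c : ℝ) {r : ℝ} (hr : 0 ≤ r) : 0 ≤ sc c r := by
  unfold sc
  split_ifs with hrc
  · have : 0 ≤ c := hr.trans hrc
    positivity
  · exact hr

lemma inner_nuS {p : ℕ} (c : ℝ) (x y : EuclideanSpace ℝ (Fin p)) :
    ⟪y, nuS c x⟫ = -(sc c ‖x‖)⁻¹ * ⟪y, x⟫ := by
  unfold nuS
  split_ifs with hx
  · simp [hx]
  · rw [inner_smul_right]

lemma inner_proj_self {p : ℕ} (z v : EuclideanSpace ℝ (Fin p)) : ⟪z, proj z v⟫ = 0 := by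
  rcases eq_or_ne z 0 with rfl | hz
  · simp
  · rw [proj, inner_sub_right, inner_smul_right, real_inner_self_eq_norm_sq]
    field_simp
    ring

lemma sigmaQ_of_inner_nonneg {p : ℕ} {q x : EuclideanSpace ℝ (Fin p)} (h : 0 ≤ ⟪x, x - q⟫) :
    sigmaQ q x = 1 := by
  rw [sigmaQ, min_eq_right (by linarith), max_eq_right zero_le_one]

lemma alphaS_nonneg {p : ℕ} (q : EuclideanSpace ℝ (Fin p)) (Δ lam : ℝ)
    (x : EuclideanSpace ℝ (Fin p)) : 0 ≤ alphaS q Δ lam x :=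
  le_max_left _ _

lemma alphaS_eq_zero {p : ℕ} {q x : EuclideanSpace ℝ (Fin p)} {Δ lam : ℝ} (hlam : Δ ≤ lam)
    (hx : ‖x - q‖ ≤ Δ * sigmaQ q x) : alphaS q Δ lam x = 0 := by
  have : (‖x - q‖ - Δ * sigmaQ q x) / (lam - Δ) ≤ 0 :=
    div_nonpos_of_nonpos_of_nonneg (by linarith) (by linarith)
  rw [alphaS, min_eq_left (this.trans zero_le_one), max_eq_left this]

theorem inner_sub_mu_nonneg {p : ℕ} (c : ℝ) {q x : EuclideanSpace ℝ (Fin p)} {Δ lam : ℝ}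
    (hlam : Δ ≤ lam) (hx : ‖x - q‖ ≤ Δ) : 0 ≤ ⟪x - q, mu c q Δ lam x⟫ := by
  rw [mu, inner_add_right, inner_smul_right, inner_smul_right, nuA, inner_proj_self, mul_zero,
    add_zero, inner_nuS, real_inner_comm]
  rcases le_or_gt 0 ⟪x, x - q⟫ with hin | hin
  · rw [alphaS_eq_zero hlam (by rwa [sigmaQ_of_inner_nonneg hin, mul_one]), zero_mul]
  · have : 0 ≤ (sc c ‖x‖)⁻¹ := inv_nonneg.2 (sc_nonneg c (norm_nonneg x))
    exact mul_nonneg (alphaS_nonneg q Δ lam x) (by nlinarith)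

theorem stmt8_general (p : ℕ) (c : ℝ)
    (q : EuclideanSpace ℝ (Fin p)) (Δ lam : ℝ) (hΔ : 0 < Δ) (hlam : Δ < lam)
    (ξ : ℝ → EuclideanSpace ℝ (Fin p)) (ξ₀ : EuclideanSpace ℝ (Fin p))
    (hinit : ξ 0 = ξ₀) (hsafe0 : Δ ≤ ‖ξ₀ - q‖)
    (hode : ∀ t ∈ Set.Ici (0:ℝ), HasDerivAt ξ (mu c q Δ lam (ξ t)) t) :
    ∀ t ∈ Set.Ici (0:ℝ), Δ ≤ ‖ξ t - q‖ :=
  le_norm_sub_of_inner_deriv_nonneg hΔ.le hode (hinit ▸ hsafe0)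
    fun _ _ hlt => inner_sub_mu_nonneg c hlam.le hlt.le

theorem stmt8 (p : ℕ) (hp : 1 ≤ p) (c : ℝ) (hc : 0 < c)
    (q : EuclideanSpace ℝ (Fin p)) (Δ lam : ℝ) (hΔ : 0 < Δ) (hlam : Δ < lam)
    (hq : Δ < ‖q‖)
    (ξ : ℝ → EuclideanSpace ℝ (Fin p)) (ξ₀ : EuclideanSpace ℝ (Fin p))
    (hinit : ξ 0 = ξ₀) (hsafe0 : Δ ≤ ‖ξ₀ - q‖)
    (hode : ∀ t ∈ Set.Ici (0:ℝ), HasDerivAt ξ (mu c q Δ lam (ξ t)) t)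
    (hderiv_cont : ContinuousOn (fun t => mu c q Δ lam (ξ t)) (Set.Ici (0:ℝ))) :
    ∀ t ∈ Set.Ici (0:ℝ), Δ ≤ ‖ξ t - q‖ :=
  stmt8_general p c q Δ lam hΔ hlam ξ ξ₀ hinit hsafe0 hode
end
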